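/- Let k ≥ 2 and A ⊆ ℕ with r_{1,k}(A,n) = r_{1,k}(ℕ∖A,n) for all sufficiently large n. Then r_{1,k}(A,n) ≥ 1 for all sufficiently large n. -/

import Mathlib

/-!
Let `q = n / k`. If `r(A, n) = r(Aᶜ, n)` for `n ≥ N`, counting the pairs `(n - k b, b)`,
`b ≤ q`, gives `#(A ∩ [0, q]) + #{b ≤ q | n - k b ∈ A} = q + 1`; comparing `n` with `n + k`
shows that `m ∈ A ↔ m / k ∉ A` for all `m ≥ M`. If also `r(A, n) = 0`, then
`r(Aᶜ, n) = 0`, and together with the flip this makes `A` symmetric under `j ↦ q - j`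
away from the ends of `[0, q]`. The symmetry descends from `q` to `q / k ^ a`.
If some base-`k` digit of `q` in position `a ≤ M` is not `k - 1`, the symmetry about
`Z = q / k ^ a` seen through `k t` and `k t + (k - 1)` gives `t ∈ A ↔ t + 1 ∈ A` on `[M, k M]`.
Otherwise subtracting `j ≤ q % k ^ (M + 1)` from `q` does not change `q / k ^ (M + 1)`,
so `j ∈ A ↔ q ∈ A` on `[M, k M]`. Both contradict `k M ∈ A ↔ M ∉ A`.
-/

noncomputable def weightedRep (A : Set ℕ) (k n : ℕ) : ℕ :=
  {p : ℕ × ℕ | p.1 ∈ A ∧ p.2 ∈ A ∧ n = p.1 + k * p.2}.ncard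

open Finset

theorem Finset.card_filter_add_card_filter_eq {α : Type*} (s : Finset α) (p q : α → Prop)
    [DecidablePred p] [DecidablePred q] :
    #{x ∈ s | p x} + #{x ∈ s | q x} + #{x ∈ s | ¬p x ∧ ¬q x} = #s + #{x ∈ s | p x ∧ q x} := by
  classical
  simp_rw [← not_or]
  rw [← card_union_add_card_inter, ← filter_or, ← filter_and, add_right_comm,
    card_filter_add_card_filter_not]

theorem weightedRep_eq_card (A : Set ℕ) [DecidablePred (· ∈ A)] {k : ℕ} (hk : 0 < k) (n : ℕ) :
    weightedRep A k n = #{b ∈ range (n / k + 1) | n - k * b ∈ A ∧ b ∈ A} := by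
  have hinj : Set.InjOn Prod.snd {p : ℕ × ℕ | p.1 ∈ A ∧ p.2 ∈ A ∧ n = p.1 + k * p.2} := by
    rintro ⟨a, b⟩ ⟨-, -, hab⟩ ⟨a', b'⟩ ⟨-, -, hab'⟩ (rfl : b = b')
    simp only at hab hab'
    simp only [Prod.mk.injEq, and_true]
    omega
  rw [weightedRep, ← hinj.ncard_image, ← Set.ncard_coe_finset]
  congr 1
  ext b
  simp only [Set.mem_image, Set.mem_ofPred_eq, Prod.exists, exists_eq_right, coe_filter,
    mem_range, Nat.lt_succ_iff, Nat.le_div_iff_mul_le hk]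
  constructor
  · rintro ⟨a, ha, hb, rfl⟩
    refine ⟨by rw [mul_comm]; omega, by simpa using ha, hb⟩
  · rintro ⟨hbn, ha, hb⟩
    exact ⟨n - k * b, ha, hb, by rw [mul_comm] at hbn; omega⟩

open Classical in
theorem card_add_card_eq_of_weightedRep_eq {A : Set ℕ} {k n : ℕ} (hk : 0 < k)
    (h : weightedRep A k n = weightedRep Aᶜ k n) :
    #{b ∈ range (n / k + 1) | b ∈ A} + #{b ∈ range (n / k + 1) | n - k * b ∈ A} = n / k + 1 := by
  have hcount := card_filter_add_card_filter_eq (range (n / k + 1)) (n - k * · ∈ A) (· ∈ A)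
  simp only [weightedRep_eq_card _ hk, Set.mem_compl_iff] at h
  rw [card_range, ← h] at hcount
  omega

def FlipsAbove (A : Set ℕ) (k M : ℕ) : Prop :=
  ∀ m, M ≤ m → (m ∈ A ↔ m / k ∉ A)

open Classical in
theorem flipsAbove_of_weightedRep_eq {A : Set ℕ} {k N : ℕ} (hk : 0 < k)
    (hN : ∀ n, N ≤ n → weightedRep A k n = weightedRep Aᶜ k n) : FlipsAbove A k (N + k) := by
  intro m hm
  obtain ⟨n, rfl⟩ : ∃ n, m = n + k := ⟨m - k, by omega⟩
  have hcur := card_add_card_eq_of_weightedRep_eq hk (hN n (by omega))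
  have hnext := card_add_card_eq_of_weightedRep_eq hk (hN (n + k) (by omega))
  have hcountA : #{b ∈ range (n / k + 1 + 1) | b ∈ A}
      = #{b ∈ range (n / k + 1) | b ∈ A} + if n / k + 1 ∈ A then 1 else 0 := by
    rw [card_filter, card_filter, sum_range_succ]
  have hsub : ∀ b, n + k - k * (b + 1) = n - k * b := fun b => by rw [Nat.mul_succ]; omega
  have hcountRes : #{b ∈ range (n / k + 1 + 1) | n + k - k * b ∈ A}
      = #{b ∈ range (n / k + 1) | n - k * b ∈ A} + if n + k ∈ A then 1 else 0 := by
    rw [card_filter, card_filter, sum_range_succ']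
    simp only [hsub, mul_zero, Nat.sub_zero]
  rw [Nat.add_div_right n hk, hcountA, hcountRes] at hnext
  rw [Nat.add_div_right n hk]
  by_cases h1 : n + k ∈ A <;> by_cases h2 : n / k + 1 ∈ A <;>
    simp only [h1, h2, if_true, if_false, not_true, not_false_iff, iff_true, iff_false]
      at hnext ⊢ <;> omega

def SymmetricAbove (A : Set ℕ) (M q : ℕ) : Prop :=
  ∀ j, M ≤ j → j + M ≤ q → (j ∈ A ↔ q - j ∈ A)

theorem Nat.mod_pow_eq_pow_sub_one {k q a : ℕ} (hk : 0 < k) (h : ∀ i < a, q / k ^ i % k = k - 1) :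
    q % k ^ a = k ^ a - 1 := by
  induction a with
  | zero => simp [Nat.mod_one]
  | succ a ih =>
    have hpos : 0 < k ^ a := Nat.pow_pos hk
    rw [Nat.mod_pow_succ, ih fun i hi => h i (by omega), h a (by omega), pow_succ,
      Nat.mul_sub_one]
    have : k ^ a ≤ k ^ a * k := Nat.le_mul_of_pos_right _ hk
    omega

section

variable {A : Set ℕ} {k M : ℕ}

namespace FlipsAbove

theorem iff_iff_div_pow (hA : FlipsAbove A k M) {m m' : ℕ} (a : ℕ) (hm : M ≤ m / k ^ a)
    (hm' : M ≤ m' / k ^ a) : ((m ∈ A ↔ m' ∈ A) ↔ (m / k ^ a ∈ A ↔ m' / k ^ a ∈ A)) := by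
  induction a generalizing m m' with
  | zero => simp
  | succ a ih =>
    simp only [pow_succ', ← Nat.div_div_eq_div_mul] at hm hm' ⊢
    have hM : ∀ x, M ≤ x / k / k ^ a → M ≤ x := fun x hx =>
      hx.trans ((Nat.div_le_self _ _).trans (Nat.div_le_self _ _))
    rw [hA m (hM m hm), hA m' (hM m' hm'), not_iff_not]
    exact ih hm hm'

theorem not_iff_mul (hA : FlipsAbove A k M) (hk : 0 < k) : ¬(M ∈ A ↔ k * M ∈ A) := by
  have h := hA (k * M) (Nat.le_mul_of_pos_left M hk)
  rw [Nat.mul_div_cancel_left M hk] at h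
  tauto

theorem not_forall_iff_succ (hA : FlipsAbove A k M) (hk : 0 < k) :
    ¬∀ t, M ≤ t → t < k * M → (t ∈ A ↔ t + 1 ∈ A) := by
  intro h
  have hconst : ∀ t, M ≤ t → t ≤ k * M → (M ∈ A ↔ t ∈ A) := by
    intro t ht
    induction t, ht using Nat.le_induction with
    | base => exact fun _ => Iff.rfl
    | succ t ht ih => exact fun htk => (ih (by omega)).trans (h t ht (by omega))
  exact hA.not_iff_mul hk (hconst _ (Nat.le_mul_of_pos_left M hk) le_rfl)

end FlipsAbove

namespace SymmetricAbove

variable {q : ℕ}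

theorem div_pow (hS : SymmetricAbove A M q) (hA : FlipsAbove A k M) {m : ℕ} (a : ℕ)
    (hmq : m ≤ q) (hm : M ≤ m / k ^ a) (hm' : M ≤ (q - m) / k ^ a) :
    m / k ^ a ∈ A ↔ (q - m) / k ^ a ∈ A := by
  have hle : ∀ x, M ≤ x / k ^ a → M ≤ x := fun x hx => hx.trans (Nat.div_le_self _ _)
  exact (hA.iff_iff_div_pow a hm hm').1 (hS m (hle m hm) (by have := hle _ hm'; omega))

theorem of_div_pow (hS : SymmetricAbove A M q) (hA : FlipsAbove A k M) (hk : 0 < k) (a : ℕ) :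
    SymmetricAbove A M (q / k ^ a) := by
  intro c hc hcu
  have hpos : 0 < k ^ a := Nat.pow_pos hk
  have hcq : k ^ a * c ≤ q :=
    (Nat.mul_le_mul_left _ (by omega)).trans (Nat.mul_div_le q (k ^ a))
  have hquot : (q - k ^ a * c) / k ^ a = q / k ^ a - c := Nat.sub_mul_div _ _ _
  have h := hS.div_pow hA a hcq
  rw [Nat.mul_div_cancel_left c hpos, hquot] at h
  exact h hc (by omega)

end SymmetricAbove

namespace FlipsAbove

variable {q : ℕ}

theorem not_symmetricAbove_of_mod (hA : FlipsAbove A k M) (hmod : q % k + 1 < k)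
    (hq : k * (k * M + M + 1) ≤ q) : ¬SymmetricAbove A M q := by
  have hk : 0 < k := by omega
  intro hS
  refine hA.not_forall_iff_succ hk fun t ht htk => ?_
  have hquot : k * M + M + 1 ≤ q / k := (Nat.le_div_iff_mul_le hk).2 (by linarith)
  have hright : t + 1 ∈ A ↔ q / k - (t + 1) ∈ A := by
    simpa only [pow_one] using hS.of_div_pow hA hk 1 (t + 1) (by omega) (by rw [pow_one]; omega)
  have hsucc : (q + 1) / k = q / k := by
    rw [← Nat.mod_add_div q k, add_right_comm, Nat.add_mul_div_left _ _ hk,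
      Nat.div_eq_of_lt hmod, zero_add, Nat.add_mul_div_left _ _ hk, Nat.div_eq_of_lt
      (Nat.mod_lt q hk), zero_add]
  have hlow : (k * t + (k - 1)) / k = t := by
    rw [add_comm, Nat.add_mul_div_left _ _ hk, Nat.div_eq_of_lt (by omega), zero_add]
  have hkt : k * (t + 1) ≤ k * (k * M) := Nat.mul_le_mul_left k htk
  have hhigh : (q - (k * t + (k - 1))) / k = q / k - (t + 1) := by
    rw [show q - (k * t + (k - 1)) = q + 1 - k * (t + 1) by rw [Nat.mul_succ]; omega,
      Nat.sub_mul_div, hsucc]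
  have hleft := hS.div_pow hA 1 (m := k * t + (k - 1))
  simp only [pow_one, hlow, hhigh] at hleft
  have hkM : k * (k * M + M + 1) = k * (k * M) + k * M + k := by ring
  exact (hleft (by rw [Nat.mul_succ] at hkt; omega) ht (by omega)).trans hright.symm

theorem iff_of_le_mod_pow (hA : FlipsAbove A k M) (hS : SymmetricAbove A M q) (hk : 0 < k)
    {a j : ℕ} (hj : M ≤ j) (hjq : j ≤ q % k ^ a) (hu : M ≤ q / k ^ a) : j ∈ A ↔ q ∈ A := by
  have hpos : 0 < k ^ a := Nat.pow_pos hk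
  have hq := Nat.mod_add_div q (k ^ a)
  have hquot : (q - j) / k ^ a = q / k ^ a := by
    rw [show q - j = q % k ^ a - j + k ^ a * (q / k ^ a) by omega, Nat.add_mul_div_left _ _ hpos,
      Nat.div_eq_of_lt (by have := Nat.mod_lt q hpos; omega), zero_add]
  have hMu : M ≤ k ^ a * (q / k ^ a) := hu.trans (Nat.le_mul_of_pos_left _ hpos)
  refine (hS j hj (by omega)).trans ?_
  exact (hA.iff_iff_div_pow a (hquot ▸ hu) hu).2 (by rw [hquot])

theorem not_symmetricAbove_of_le_mod_pow (hA : FlipsAbove A k M) (hk : 0 < k) {a : ℕ}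
    (hmod : k * M ≤ q % k ^ a) (hu : M ≤ q / k ^ a) : ¬SymmetricAbove A M q := fun hS =>
  have hM : M ≤ k * M := Nat.le_mul_of_pos_left M hk
  hA.not_iff_mul hk ((hA.iff_of_le_mod_pow hS hk le_rfl (hM.trans hmod) hu).trans
    (hA.iff_of_le_mod_pow hS hk hM hmod hu).symm)

theorem not_symmetricAbove (hA : FlipsAbove A k M) (hk : 2 ≤ k)
    (hq : k ^ (M + 1) * (k * M + M + 1) ≤ q) : ¬SymmetricAbove A M q := by
  have hk0 : 0 < k := by omega
  intro hS
  by_cases hdigit : ∃ a ≤ M, q / k ^ a % k ≠ k - 1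
  · obtain ⟨a, ha, hd⟩ := hdigit
    refine hA.not_symmetricAbove_of_mod (q := q / k ^ a) ?_ ?_ (hS.of_div_pow hA hk0 a)
    · have := Nat.mod_lt (q / k ^ a) hk0
      omega
    · calc k * (k * M + M + 1) ≤ q / k ^ M :=
            (Nat.le_div_iff_mul_le (Nat.pow_pos hk0)).2 (by rw [pow_succ] at hq; linarith)
        _ ≤ q / k ^ a := Nat.div_le_div_left (Nat.pow_le_pow_right hk0 ha) (Nat.pow_pos hk0)
  · push Not at hdigit
    refine hA.not_symmetricAbove_of_le_mod_pow hk0 (a := M + 1) ?_ ?_ hS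
    · rw [Nat.mod_pow_eq_pow_sub_one hk0 fun i hi => hdigit i (by omega), pow_succ]
      have := Nat.mul_le_mul_right k (Nat.lt_pow_self (n := M) hk)
      rw [Nat.succ_mul] at this
      rw [mul_comm]
      omega
    · refine (Nat.le_div_iff_mul_le (Nat.pow_pos hk0)).2 (le_trans ?_ hq)
      rw [mul_comm]
      exact Nat.mul_le_mul_left _ (by omega)

end FlipsAbove

end

theorem symmetricAbove_of_weightedRep_eq_zero {A : Set ℕ} {k M n : ℕ} (hk : 0 < k)
    (hA : FlipsAbove A k M) (h : weightedRep A k n = 0) (hc : weightedRep Aᶜ k n = 0) :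
    SymmetricAbove A M (n / k) := by
  classical
  intro j hj hjq
  have hb : n / k - j ∈ range (n / k + 1) := mem_range.2 (by omega)
  rw [weightedRep_eq_card _ hk, card_eq_zero, filter_eq_empty_iff] at h hc
  have hquot : (n - k * (n / k - j)) / k = j := by rw [Nat.sub_mul_div]; omega
  have hflip := hA (n - k * (n / k - j)) (hj.trans (hquot.symm.le.trans (Nat.div_le_self _ _)))
  rw [hquot] at hflip
  have h1 := h hb
  have h2 := hc hb
  simp only [Set.mem_compl_iff] at h2
  tauto

theorem stmt_4 (k : ℕ) (hk : 2 ≤ k) (A : Set ℕ)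
    (hA : ∀ᶠ n in Filter.atTop, weightedRep A k n = weightedRep Aᶜ k n) :
    ∀ᶠ n in Filter.atTop, 1 ≤ weightedRep A k n := by
  have hk0 : 0 < k := by omega
  obtain ⟨N, hN⟩ := Filter.eventually_atTop.1 hA
  have hflip := flipsAbove_of_weightedRep_eq hk0 hN
  filter_upwards [Filter.eventually_ge_atTop N,
    (Nat.tendsto_div_const_atTop hk0.ne').eventually_ge_atTop
      (k ^ (N + k + 1) * (k * (N + k) + (N + k) + 1))] with n hn hq
  by_contra hzero
  have h0 : weightedRep A k n = 0 := by omega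
  exact hflip.not_symmetricAbove hk hq
    (symmetricAbove_of_weightedRep_eq_zero hk0 hflip h0 (hN n hn ▸ h0))
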